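/- Let φ : F → ℝ be locally Lipschitz. Suppose (f_j) is a sequence in F with f_j → f, and (g_j) is a sequence in F' with g_j ∈ ∂φ(f_j) for each j. If g ∈ F' is a weak* cluster point of the sequence (g_j), then g ∈ ∂φ(f). -/

import Mathlib

/- Setting: `F` (and `E`) are Fréchet spaces: complete topological vector spaces over ℝ
whose topology is generated by an increasing sequence of seminorms `p 0 ≤ p 1 ≤ ⋯`
(`Monotone p` together with `WithSeminorms p`).  The first seminorm of the family,
written `‖·‖¹` in the paper, is `p 0`.  The dual `F'` with its weak* topology is
`WeakDual ℝ F`. -/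

open Filter Topology

section Defs

variable {E F : Type*}
  [AddCommGroup E] [Module ℝ E] [UniformSpace E] [IsUniformAddGroup E] [ContinuousSMul ℝ E]
  [AddCommGroup F] [Module ℝ F] [UniformSpace F] [IsUniformAddGroup F] [ContinuousSMul ℝ F]

/-- Clarke's generalized directional derivative
`φ°(f;g) = limsup_{h → f, t ↓ 0} (φ(h+tg) − φ(h))/t`. -/
noncomputable def clarkeDeriv (φ : F → ℝ) (f g : F) : ℝ :=
  Filter.limsup (fun q : F × ℝ => (φ (q.1 + q.2 • g) - φ q.1) / q.2)
    ((𝓝 f) ×ˢ (𝓝[>] (0 : ℝ)))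

/-- The Clarke subdifferential `∂φ(f) = {f' ∈ F' : ⟨f',g⟩ ≤ φ°(f;g) ∀ g}`, a subset of
the dual equipped with the weak* topology. -/
def clarkeSubdiff (φ : F → ℝ) (f : F) : Set (WeakDual ℝ F) :=
  {u | ∀ g : F, u g ≤ clarkeDeriv φ f g}

/-- Locally Lipschitz with respect to the first seminorm `p 0` of the defining
increasing family of seminorms (as used throughout the paper). -/
def LocLip (p : ℕ → Seminorm ℝ F) (φ : F → ℝ) : Prop :=
  ∀ x : F, ∃ U ∈ 𝓝 x, ∃ K : ℝ, 0 ≤ K ∧ ∀ a ∈ U, ∀ b ∈ U, |φ a - φ b| ≤ K * (p 0) (a - b)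

/-- The weak* seminorm `ρ_ϕ(y) = sup_{x ∈ ϕ} |y x|` attached to a finite set `ϕ`. -/
noncomputable def dualSeminorm (s : Finset F) (y : WeakDual ℝ F) : ℝ :=
  ⨆ x ∈ s, |y x|

/-- `λ_{φ,ϕ}(f) = min_{y ∈ ∂φ(f)} ρ_ϕ(y)`. -/
noncomputable def lam (φ : F → ℝ) (s : Finset F) (f : F) : ℝ :=
  sInf (dualSeminorm s '' clarkeSubdiff φ f)

/-- The Chang Palais–Smale condition. -/
def ChangPS (φ : F → ℝ) : Prop :=
  ∀ u : ℕ → F, (∃ C : ℝ, ∀ n, |φ (u n)| ≤ C) →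
    (∀ s : Finset F, Tendsto (fun n => lam φ s (u n)) atTop (𝓝 0)) →
    ∃ g : ℕ → ℕ, StrictMono g ∧ ∃ x : F, Tendsto (u ∘ g) atTop (𝓝 x)

/-- The Chang Palais–Smale condition at level `c`. -/
def ChangPSAt (φ : F → ℝ) (c : ℝ) : Prop :=
  ∀ u : ℕ → F, Tendsto (fun n => φ (u n)) atTop (𝓝 c) →
    (∀ s : Finset F, Tendsto (fun n => lam φ s (u n)) atTop (𝓝 0)) →
    ∃ g : ℕ → ℕ, StrictMono g ∧ ∃ x : F, Tendsto (u ∘ g) atTop (𝓝 x)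

/-- Keller `C¹_c` on a set `U`, with derivative family `D`: directional derivatives exist,
each `D x` is continuous linear, and `(x,h) ↦ D x h` is jointly continuous. -/
def C1cOn (τ : E → F) (D : E → (E →L[ℝ] F)) (U : Set E) : Prop :=
  (∀ x ∈ U, ∀ h : E,
      Tendsto (fun t : ℝ => t⁻¹ • (τ (x + t • h) - τ x)) (𝓝[≠] (0 : ℝ)) (𝓝 (D x h))) ∧
  ContinuousOn (fun q : E × E => D q.1 q.2) (U ×ˢ (Set.univ : Set E))

/-- Keller `C¹_c` on a set (derivative existential). -/
def IsC1cOn (τ : E → F) (U : Set E) : Prop :=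
  ∃ D : E → (E →L[ℝ] F), C1cOn τ D U

/-- Local `C¹_c`-diffeomorphism: every point has an open neighbourhood mapped bijectively
onto an open set, `τ` being `C¹_c` there with a `C¹_c` inverse. -/
def IsLocalC1cDiffeo (τ : E → F) : Prop :=
  ∀ x : E, ∃ U : Set E, IsOpen U ∧ x ∈ U ∧ ∃ V : Set F, IsOpen V ∧ Set.BijOn τ U V ∧
    IsC1cOn τ U ∧ ∃ σ : F → E, (∀ y ∈ V, τ (σ y) = y) ∧ (∀ x' ∈ U, σ (τ x') = x') ∧
      IsC1cOn σ V

end Defs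

/-!
The Clarke derivative `x ↦ φ°(x; v)` is upper semicontinuous: a neighbourhood `N × (0, δ)` of
`(f, 0⁺)` on which the difference quotients stay below `c` is also a neighbourhood of `(x, 0⁺)`
for every `x` in the interior of `N`. The local Lipschitz bound keeps the quotients bounded,
which is what makes these real-valued `limsup`s honest rather than junk values. The inequality
`⟨g_j, v⟩ ≤ φ°(f_j; v)` then passes to the weak* cluster point `g`, since `y ↦ ⟨y, v⟩` is
weak* continuous.
-/

theorem Filter.Eventually.eventually_nhds_prod {X Y : Type*} [TopologicalSpace X]
    {l : Filter Y} {p : X × Y → Prop} {x : X} (h : ∀ᶠ q in 𝓝 x ×ˢ l, p q) :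
    ∀ᶠ x' in 𝓝 x, ∀ᶠ q in 𝓝 x' ×ˢ l, p q := by
  obtain ⟨pa, hpa, pb, hpb, hp⟩ := eventually_prod_iff.mp h
  exact hpa.eventually_nhds.mono fun x' hx' => eventually_prod_iff.mpr ⟨pa, hx', pb, hpb, hp⟩

theorem MapClusterPt.le_of_upperSemicontinuousAt {α X β : Type*} [TopologicalSpace X]
    [LinearOrder β] [DenselyOrdered β] [TopologicalSpace β] [ClosedIicTopology β]
    {l : Filter α} {u : α → X} {x : X} {G : X → β} {a : α → β} {b : β}
    (hb : MapClusterPt b l a) (hG : UpperSemicontinuousAt G x) (hu : Tendsto u l (𝓝 x))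
    (ha : ∀ᶠ i in l, a i ≤ G (u i)) : b ≤ G x := by
  refine le_of_forall_gt_imp_ge_of_dense fun y hy => isClosed_Iic.mem_of_mapClusterPt hb ?_
  filter_upwards [ha, hu.eventually (hG y hy)] with i hai hGi
  exact hai.trans hGi.le

section Clarke

variable {F : Type*} [AddCommGroup F] [Module ℝ F] [UniformSpace F]

/-- `clarkeDeriv φ x v` unfolds to the `limsup` of this quotient along `𝓝 x ×ˢ 𝓝[>] 0`. -/
noncomputable def clarkeQuotient (φ : F → ℝ) (v : F) (q : F × ℝ) : ℝ :=
  (φ (q.1 + q.2 • v) - φ q.1) / q.2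

theorem eventually_abs_clarkeQuotient_le [ContinuousAdd F] [ContinuousSMul ℝ F]
    {φ : F → ℝ} {s : Seminorm ℝ F} {K : ℝ} {U : Set F} {f : F} (hU : U ∈ 𝓝 f)
    (hK : ∀ a ∈ U, ∀ b ∈ U, |φ a - φ b| ≤ K * s (a - b)) (v : F) :
    ∀ᶠ q in 𝓝 f ×ˢ 𝓝[>] (0 : ℝ), |clarkeQuotient φ v q| ≤ K * s v := by
  have hmove :
      Tendsto (fun q : F × ℝ => q.1 + q.2 • v) (𝓝 f ×ˢ 𝓝[>] 0) (𝓝 (f + (0 : ℝ) • v)) :=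
    tendsto_fst.add ((tendsto_snd.mono_right nhdsWithin_le_nhds).smul_const v)
  rw [zero_smul, add_zero] at hmove
  filter_upwards [tendsto_fst.eventually_mem hU, hmove.eventually_mem hU,
    tendsto_snd.eventually self_mem_nhdsWithin] with q hq hqv (ht : 0 < q.2)
  rw [clarkeQuotient, abs_div, abs_of_pos ht, div_le_iff₀ ht]
  calc |φ (q.1 + q.2 • v) - φ q.1| ≤ K * s (q.1 + q.2 • v - q.1) := hK _ hqv _ hq
    _ = K * s v * q.2 := by
      rw [add_sub_cancel_left, map_smul_eq_mul, Real.norm_eq_abs, abs_of_pos ht]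
      ring

theorem upperSemicontinuousAt_clarkeDeriv {φ : F → ℝ} {f v : F} {M : ℝ}
    (hbd : ∀ᶠ q in 𝓝 f ×ˢ 𝓝[>] (0 : ℝ), |clarkeQuotient φ v q| ≤ M) :
    UpperSemicontinuousAt (fun x => clarkeDeriv φ x v) f := by
  intro c hc
  obtain ⟨c', hc', hc'c⟩ := exists_between hc
  have hlt : ∀ᶠ q in 𝓝 f ×ˢ 𝓝[>] (0 : ℝ), clarkeQuotient φ v q < c' :=
    eventually_lt_of_limsup_lt hc' ⟨M, hbd.mono fun q hq => (le_abs_self _).trans hq⟩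
  filter_upwards [(hbd.and hlt).eventually_nhds_prod] with x hx
  have hcobdd : IsCoboundedUnder (· ≤ ·) (𝓝 x ×ˢ 𝓝[>] (0 : ℝ)) (clarkeQuotient φ v) :=
    isCoboundedUnder_le_of_eventually_le _ (hx.mono fun q hq => neg_le_of_abs_le hq.1)
  exact (limsup_le_of_le hcobdd (hx.mono fun q hq => hq.2.le)).trans_lt hc'c

end Clarke

theorem clarkeSubdiff_mem_of_clusterPt_general
    {F : Type*} [AddCommGroup F] [Module ℝ F] [UniformSpace F] [IsUniformAddGroup F]
    [ContinuousSMul ℝ F]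
    (p : ℕ → Seminorm ℝ F)
    (φ : F → ℝ) (hφ : LocLip p φ)
    (fseq : ℕ → F) (gseq : ℕ → WeakDual ℝ F) (f : F) (g : WeakDual ℝ F)
    (hmem : ∀ j, gseq j ∈ clarkeSubdiff φ (fseq j))
    (hf : Filter.Tendsto fseq Filter.atTop (𝓝 f))
    (hg : MapClusterPt g Filter.atTop gseq) :
    g ∈ clarkeSubdiff φ f := by
  intro v
  obtain ⟨U, hU, K, -, hK⟩ := hφ f
  have husc := upperSemicontinuousAt_clarkeDeriv (eventually_abs_clarkeQuotient_le hU hK v)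
  have hgv : MapClusterPt (g v) atTop fun j => gseq j v :=
    hg.continuousAt_comp (WeakDual.eval_continuous v).continuousAt
  exact hgv.le_of_upperSemicontinuousAt (G := fun x => clarkeDeriv φ x v) husc hf
    (.of_forall fun j => hmem j v)

/-- closedness of the subdifferential under weak* cluster points along
convergent sequences. -/
theorem clarkeSubdiff_mem_of_clusterPt
    {F : Type*} [AddCommGroup F] [Module ℝ F] [UniformSpace F] [IsUniformAddGroup F]
    [ContinuousSMul ℝ F] [CompleteSpace F]
    (p : ℕ → Seminorm ℝ F) (hmono : Monotone p) (hsp : WithSeminorms p)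
    (φ : F → ℝ) (hφ : LocLip p φ)
    (fseq : ℕ → F) (gseq : ℕ → WeakDual ℝ F) (f : F) (g : WeakDual ℝ F)
    (hmem : ∀ j, gseq j ∈ clarkeSubdiff φ (fseq j))
    (hf : Filter.Tendsto fseq Filter.atTop (𝓝 f))
    (hg : MapClusterPt g Filter.atTop gseq) :
    g ∈ clarkeSubdiff φ f :=
  clarkeSubdiff_mem_of_clusterPt_general p φ hφ fseq gseq f g hmem hf hg
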